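/- arXiv:2007.06056 — 2 statements merged into one kernel-verified Lean document; each statement's English description precedes it below -/
import Mathlib

section
/- Let S_j = (x_j, y_j) ∈ ℝ² for j = 1, 2, 3 with x_1 < x_2 < x_3, and let δ_1, δ_2, δ_3 > 0. Then the pivot point P_3 = (x̃_3, ỹ_3) of the rightmost point S_3 lies on the segment joining S_1 and S_2 (i.e., in the convex hull of {S_1, S_2}), and the pivot point P_1 = (x̃_1, ỹ_1) of the leftmost point S_1 lies on the segment joining S_2 and S_3 (i.e., in the convex hull of {S_2, S_3}). -/
/-!
The pivot point `P_i` is the centre of mass of the points `S_j` with the (signed) weights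
`δ_j (x_j - x_i)`. These weights vanish at `j = i`, and when `S_i` is the rightmost
(leftmost) point they are all nonpositive (nonnegative), so `P_i` is a convex combination
of the other points.
-/

open Finset

lemma Finset.centerMass_eq_add_inv_smul_sum_sub {E ι : Type*} [AddCommGroup E] [Module ℝ E]
    (t : Finset ι) (w : ι → ℝ) (z : ι → E) (p : E) (hw : ∑ j ∈ t, w j ≠ 0) :
    t.centerMass w z = p + (∑ j ∈ t, w j)⁻¹ • ∑ j ∈ t, w j • (z j - p) := by
  simp only [centerMass, smul_sub, sum_sub_distrib, ← sum_smul, smul_smul, inv_mul_cancel₀ hw,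
    one_smul, add_sub_cancel]

variable {ι : Type*} (s : Finset ι) (δ : ι → ℝ) (S : ι → ℝ × ℝ) (i : ι)

-- The paper's `P_i`; where the denominator vanishes, `x / 0 = 0` makes it `S i`.
noncomputable def pivot : ℝ × ℝ :=
  ((S i).1 + (∑ j ∈ s, δ j * ((S j).1 - (S i).1) ^ 2) / ∑ j ∈ s, δ j * ((S j).1 - (S i).1),
    (S i).2 + (∑ j ∈ s, δ j * ((S j).1 - (S i).1) * ((S j).2 - (S i).2)) /
      ∑ j ∈ s, δ j * ((S j).1 - (S i).1))

def pivotWeight (j : ι) : ℝ := δ j * ((S j).1 - (S i).1)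

@[simp]
lemma pivotWeight_self : pivotWeight δ S i i = 0 := by
  simp [pivotWeight]

lemma pivot_eq_centerMass (h : ∑ j ∈ s, pivotWeight δ S i j ≠ 0) :
    pivot s δ S i = s.centerMass (pivotWeight δ S i) S := by
  rw [centerMass_eq_add_inv_smul_sum_sub s _ S (S i) h]
  ext <;> simp only [pivot, pivotWeight, Prod.fst_add, Prod.snd_add, Prod.smul_fst, Prod.smul_snd,
    Prod.fst_sum, Prod.snd_sum, Prod.fst_sub, Prod.snd_sub, smul_eq_mul, sq, mul_assoc,
    div_eq_inv_mul]

lemma pivot_eq_centerMass_erase [DecidableEq ι] (h : ∑ j ∈ s, pivotWeight δ S i j ≠ 0) :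
    pivot s δ S i = (s.erase i).centerMass (pivotWeight δ S i) S := by
  rw [pivot_eq_centerMass s δ S i h, centerMass_subset _ (erase_subset i s)]
  intro j hjs hj
  obtain rfl : j = i := by_contra fun hne ↦ hj (mem_erase.2 ⟨hne, hjs⟩)
  exact pivotWeight_self δ S j

theorem pivot_mem_convexHull_of_forall_fst_le [DecidableEq ι] (hδ : ∀ j ∈ s, 0 < δ j)
    (hle : ∀ j ∈ s, (S j).1 ≤ (S i).1) (hlt : ∃ j ∈ s, (S j).1 < (S i).1) :
    pivot s δ S i ∈ convexHull ℝ (S '' ↑(s.erase i)) := by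
  have hw : ∀ j ∈ s, pivotWeight δ S i j ≤ 0 := fun j hj ↦
    mul_nonpos_of_nonneg_of_nonpos (hδ j hj).le (sub_nonpos.2 (hle j hj))
  have hsum : ∑ j ∈ s, pivotWeight δ S i j < 0 := by
    obtain ⟨k, hk, hk_lt⟩ := hlt
    exact sum_neg' hw ⟨k, hk, mul_neg_of_pos_of_neg (hδ k hk) (sub_neg.2 hk_lt)⟩
  rw [pivot_eq_centerMass_erase s δ S i hsum.ne]
  exact centerMass_mem_convexHull_of_nonpos _ (fun j hj ↦ hw j (mem_of_mem_erase hj))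
    (by rwa [sum_erase _ (pivotWeight_self δ S i)]) fun j hj ↦ Set.mem_image_of_mem S hj

theorem pivot_mem_convexHull_of_forall_le_fst [DecidableEq ι] (hδ : ∀ j ∈ s, 0 < δ j)
    (hle : ∀ j ∈ s, (S i).1 ≤ (S j).1) (hlt : ∃ j ∈ s, (S i).1 < (S j).1) :
    pivot s δ S i ∈ convexHull ℝ (S '' ↑(s.erase i)) := by
  have hw : ∀ j ∈ s, 0 ≤ pivotWeight δ S i j := fun j hj ↦
    mul_nonneg (hδ j hj).le (sub_nonneg.2 (hle j hj))
  have hsum : 0 < ∑ j ∈ s, pivotWeight δ S i j := by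
    obtain ⟨k, hk, hk_lt⟩ := hlt
    exact sum_pos' hw ⟨k, hk, mul_pos (hδ k hk) (sub_pos.2 hk_lt)⟩
  rw [pivot_eq_centerMass_erase s δ S i hsum.ne']
  exact centerMass_mem_convexHull _ (fun j hj ↦ hw j (mem_of_mem_erase hj))
    (by rwa [sum_erase _ (pivotWeight_self δ S i)]) fun j hj ↦ Set.mem_image_of_mem S hj

/-- With three points x₁ < x₂ < x₃ and positive weights, the pivot
point of the rightmost point S₃ lies on the segment joining S₁ and S₂, and the
pivot point of the leftmost point S₁ lies on the segment joining S₂ and S₃. -/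
theorem stmt_9 (x₁ x₂ x₃ y₁ y₂ y₃ δ₁ δ₂ δ₃ : ℝ)
    (h12 : x₁ < x₂) (h23 : x₂ < x₃)
    (hδ₁ : 0 < δ₁) (hδ₂ : 0 < δ₂) (hδ₃ : 0 < δ₃) :
    ((x₃ + (δ₁ * (x₁ - x₃) ^ 2 + δ₂ * (x₂ - x₃) ^ 2 + δ₃ * (x₃ - x₃) ^ 2) /
            (δ₁ * (x₁ - x₃) + δ₂ * (x₂ - x₃) + δ₃ * (x₃ - x₃)),
      y₃ + (δ₁ * (x₁ - x₃) * (y₁ - y₃) + δ₂ * (x₂ - x₃) * (y₂ - y₃) +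
              δ₃ * (x₃ - x₃) * (y₃ - y₃)) /
            (δ₁ * (x₁ - x₃) + δ₂ * (x₂ - x₃) + δ₃ * (x₃ - x₃))) : ℝ × ℝ) ∈
      convexHull ℝ ({(x₁, y₁), (x₂, y₂)} : Set (ℝ × ℝ)) ∧
    ((x₁ + (δ₁ * (x₁ - x₁) ^ 2 + δ₂ * (x₂ - x₁) ^ 2 + δ₃ * (x₃ - x₁) ^ 2) /
            (δ₁ * (x₁ - x₁) + δ₂ * (x₂ - x₁) + δ₃ * (x₃ - x₁)),
      y₁ + (δ₁ * (x₁ - x₁) * (y₁ - y₁) + δ₂ * (x₂ - x₁) * (y₂ - y₁) +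
              δ₃ * (x₃ - x₁) * (y₃ - y₁)) /
            (δ₁ * (x₁ - x₁) + δ₂ * (x₂ - x₁) + δ₃ * (x₃ - x₁))) : ℝ × ℝ) ∈
      convexHull ℝ ({(x₂, y₂), (x₃, y₃)} : Set (ℝ × ℝ)) := by
  set S : Fin 3 → ℝ × ℝ := ![(x₁, y₁), (x₂, y₂), (x₃, y₃)]
  set δ : Fin 3 → ℝ := ![δ₁, δ₂, δ₃]
  have h13 : x₁ < x₃ := h12.trans h23
  have hδ : ∀ j ∈ (univ : Finset (Fin 3)), 0 < δ j := by
    simp [δ, Fin.forall_fin_succ, hδ₁, hδ₂, hδ₃]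
  have h₁ : pivot univ δ S 2 ∈ convexHull ℝ {S 0, S 1} := by
    have := pivot_mem_convexHull_of_forall_fst_le univ δ S 2 hδ
      (by simp [S, Fin.forall_fin_succ, h13.le, h23.le]) ⟨0, mem_univ _, h13⟩
    rwa [show univ.erase (2 : Fin 3) = {0, 1} by decide, coe_pair, Set.image_pair] at this
  have h₂ : pivot univ δ S 0 ∈ convexHull ℝ {S 1, S 2} := by
    have := pivot_mem_convexHull_of_forall_le_fst univ δ S 0 hδ
      (by simp [S, Fin.forall_fin_succ, h12.le, h13.le]) ⟨2, mem_univ _, h13⟩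
    rwa [show univ.erase (0 : Fin 3) = {1, 2} by decide, coe_pair, Set.image_pair] at this
  simpa [pivot, Fin.sum_univ_three, S, δ] using And.intro h₁ h₂
end

section
/- Let n ≥ 2, let S_j = (x_j, y_j) ∈ ℝ² for j = 1,…,n with x_j ≤ x_n for all j and x_j < x_n for at least one j, and let δ_1,…,δ_n > 0. Then the pivot point P_n = (x̃_n, ỹ_n) of S_n, where x̃_n = x_n + (Σ_{j=1}^n δ_j(x_j − x_n)²)/(Σ_{j=1}^n δ_j(x_j − x_n)) and ỹ_n = y_n + (Σ_{j=1}^n δ_j(x_j − x_n)(y_j − y_n))/(Σ_{j=1}^n δ_j(x_j − x_n)), lies in the convex hull of {S_1,…,S_{n−1}}. That is, with n points, the pivot points corresponding to the rightmost point on the x-axis are bounded by the convex hull of the other n − 1 points. -/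
/-!
With weights `w j = δ j * (x j - x i)`, the pivot point of `S i` is
`S i + (∑ w)⁻¹ • ∑ w j • (S j - S i)`, which is the center of mass of the points `S j` with
weights `w`. When `x i` is maximal all these weights are `≤ 0`, the one at `j = i` vanishes and
their sum is negative, so this center of mass lies in the convex hull of the other points.
-/

open Finset

theorem Finset.add_inv_sum_smul_sub_eq_centerMass {K E ι : Type*} [Field K] [AddCommGroup E]
    [Module K E] (t : Finset ι) (w : ι → K) (z : ι → E) (c : E) (hw : ∑ i ∈ t, w i ≠ 0) :
    c + (∑ i ∈ t, w i)⁻¹ • ∑ i ∈ t, w i • (z i - c) = t.centerMass w z := by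
  simp only [smul_sub, sum_sub_distrib, ← sum_smul, inv_smul_smul₀ hw, centerMass]
  abel

section Pivot

variable {ι : Type*} [Fintype ι]

noncomputable def pivotPoint (δ x y : ι → ℝ) (i : ι) : ℝ × ℝ :=
  (x i + (∑ j, δ j * (x j - x i) ^ 2) / ∑ j, δ j * (x j - x i),
    y i + (∑ j, δ j * (x j - x i) * (y j - y i)) / ∑ j, δ j * (x j - x i))

theorem pivotPoint_eq_centerMass (δ x y : ι → ℝ) (i : ι) (hD : ∑ j, δ j * (x j - x i) ≠ 0) :
    pivotPoint δ x y i = univ.centerMass (fun j => δ j * (x j - x i)) (fun j => (x j, y j)) := by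
  rw [← add_inv_sum_smul_sub_eq_centerMass _ _ _ (x i, y i) hD]
  ext
  · simp only [pivotPoint, Prod.fst_add, Prod.smul_fst, Prod.fst_sum, Prod.fst_sub, smul_eq_mul]
    simp only [mul_assoc, ← sq, div_eq_inv_mul]
  · simp only [pivotPoint, Prod.snd_add, Prod.smul_snd, Prod.snd_sum, Prod.snd_sub, smul_eq_mul]
    simp only [div_eq_inv_mul]

theorem pivotPoint_mem_convexHull_of_le {δ x : ι → ℝ} (y : ι → ℝ) {i : ι}
    (hδ : ∀ j, 0 < δ j) (hmax : ∀ j, x j ≤ x i) (hlt : ∃ j, x j < x i) :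
    pivotPoint δ x y i ∈ convexHull ℝ ((fun j => (x j, y j)) '' {j | j ≠ i}) := by
  classical
  set w : ι → ℝ := fun j => δ j * (x j - x i)
  have hw_nonpos : ∀ j, w j ≤ 0 := fun j =>
    mul_nonpos_of_nonneg_of_nonpos (hδ j).le (sub_nonpos.2 (hmax j))
  have hw_neg : ∃ j ∈ univ, w j < 0 := by
    obtain ⟨j, hj⟩ := hlt
    exact ⟨j, mem_univ j, mul_neg_of_pos_of_neg (hδ j) (sub_neg.2 hj)⟩
  have hw_self : w i = 0 := by simp [w]
  have hsum : ∑ j ∈ univ.erase i, w j < 0 := by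
    rw [sum_erase _ hw_self]
    exact sum_neg' (fun j _ => hw_nonpos j) hw_neg
  rw [pivotPoint_eq_centerMass δ x y i (by rw [← sum_erase _ hw_self]; exact hsum.ne),
    ← centerMass_subset _ (erase_subset i univ) fun j _ hj => by
      rwa [show j = i by simpa using hj]]
  exact centerMass_mem_convexHull_of_nonpos _ (fun j _ => hw_nonpos j) hsum
    fun j hj => ⟨j, ne_of_mem_erase hj, rfl⟩

end Pivot

theorem stmt_12_general (n : ℕ) (x y δ : Fin (n + 1) → ℝ)
    (hmax : ∀ j, x j ≤ x (Fin.last n)) (hlt : ∃ j, x j < x (Fin.last n))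
    (hδ : ∀ j, 0 < δ j) :
    ((x (Fin.last n) +
        (∑ j, δ j * (x j - x (Fin.last n)) ^ 2) /
          (∑ j, δ j * (x j - x (Fin.last n))),
      y (Fin.last n) +
        (∑ j, δ j * (x j - x (Fin.last n)) * (y j - y (Fin.last n))) /
          (∑ j, δ j * (x j - x (Fin.last n)))) : ℝ × ℝ) ∈
      convexHull ℝ ((fun j => ((x j, y j) : ℝ × ℝ)) '' {j | j ≠ Fin.last n}) :=
  pivotPoint_mem_convexHull_of_le y hδ hmax hlt

/-- With n ≥ 2 points whose rightmost point (on the x-axis) is the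
last one, and positive weights, the pivot point of the rightmost point lies in
the convex hull of the other n − 1 points. -/
theorem stmt_12 (n : ℕ) (hn : 1 ≤ n) (x y δ : Fin (n + 1) → ℝ)
    (hmax : ∀ j, x j ≤ x (Fin.last n)) (hlt : ∃ j, x j < x (Fin.last n))
    (hδ : ∀ j, 0 < δ j) :
    ((x (Fin.last n) +
        (∑ j, δ j * (x j - x (Fin.last n)) ^ 2) /
          (∑ j, δ j * (x j - x (Fin.last n))),
      y (Fin.last n) +
        (∑ j, δ j * (x j - x (Fin.last n)) * (y j - y (Fin.last n))) /
          (∑ j, δ j * (x j - x (Fin.last n)))) : ℝ × ℝ) ∈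
      convexHull ℝ ((fun j => ((x j, y j) : ℝ × ℝ)) '' {j | j ≠ Fin.last n}) :=
  stmt_12_general n x y δ hmax hlt hδ
end
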